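/- arXiv:2007.01609 — 8 statements merged into one kernel-verified Lean document; each statement's English description precedes it below -/
import Mathlib

section
/- Let q be a prime power with q ≡ 1 (mod 4), n = 2t, and W = {x ∈ F_{q^n} : x + x^{q^t} = 0}. Then for any natural number k, no element x of W satisfies x^{q^k + 1} = 1. -/
/-! Since `x ≠ 0`, the condition `x ^ q ^ t = -x` says `x ^ (q ^ t - 1) = -1`, so the order of `x`
divides `2 (q ^ t - 1)` but not `q ^ t - 1`. As `4 ∣ q ^ t - 1` while `q ^ k + 1 ≡ 2 (mod 4)`,
`gcd (2 (q ^ t - 1), q ^ k + 1)` divides `q ^ t - 1`, so `x ^ (q ^ k + 1) = 1` would force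
`x ^ (q ^ t - 1) = 1`, i.e. `-1 = 1`, impossible in odd characteristic. -/

lemma Nat.gcd_two_mul_dvd_of_four_dvd {a b : ℕ} (ha : 4 ∣ a) (hb : b % 4 = 2) :
    Nat.gcd (2 * a) b ∣ a := by
  obtain ⟨m, rfl⟩ : ∃ m, b = 2 * (2 * m + 1) := ⟨b / 4, by omega⟩
  rw [Nat.gcd_mul_left]
  have hodd : Odd (Nat.gcd a (2 * m + 1)) :=
    (Nat.odd_iff.mpr (by omega)).of_dvd_nat (Nat.gcd_dvd_right _ _)
  exact (Nat.coprime_two_left.mpr hodd).mul_dvd_of_dvd_of_dvd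
    ((dvd_mul_left 2 2).trans ha) (Nat.gcd_dvd_left _ _)

lemma pow_ne_one_of_pow_eq_neg_one {R : Type*} [Ring R] (hR : (-1 : R) ≠ 1) {x : R} {a b : ℕ}
    (hx : x ^ a = -1) (ha : 4 ∣ a) (hb : b % 4 = 2) : x ^ b ≠ 1 := by
  intro hxb
  have hx2a : x ^ (2 * a) = 1 := by rw [mul_comm, pow_mul, hx, neg_one_sq]
  have hxgcd : x ^ Nat.gcd (2 * a) b = 1 := pow_gcd_eq_one.mpr ⟨hx2a, hxb⟩
  obtain ⟨c, hc⟩ := Nat.gcd_two_mul_dvd_of_four_dvd ha hb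
  exact hR (by rw [← hx, hc, pow_mul, hxgcd, one_pow])

lemma pow_pred_eq_neg_one_of_pow_eq_neg {K : Type*} [DivisionRing K] {x : K} (hx : x ≠ 0)
    {m : ℕ} (hm : 0 < m) (h : x ^ m = -x) : x ^ (m - 1) = -1 :=
  mul_right_cancel₀ hx (by rw [← pow_succ, Nat.sub_add_cancel hm, h, neg_one_mul])

lemma FiniteField.neg_one_ne_one_of_odd_card {F : Type*} [Field F] [Fintype F]
    (hF : Fintype.card F % 2 = 1) : (-1 : F) ≠ 1 :=
  Ring.neg_one_ne_one_of_char_ne_two fun h ↦ by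
    have := FiniteField.even_card_iff_char_two.mp h
    omega

theorem stmt_2_general (q t : ℕ) (hq4 : q % 4 = 1)
    (F : Type) [Field F] [Fintype F] (hF : Fintype.card F = q ^ (2 * t)) :
    ∀ (k : ℕ) (x : F), x ^ q ^ t = -x → x ^ (q ^ k + 1) ≠ 1 := by
  intro k x hW
  have hpow_mod : ∀ j, q ^ j % 4 = 1 := fun j ↦ by simp [Nat.pow_mod, hq4]
  have hqt := hpow_mod t
  have hF_odd : Fintype.card F % 2 = 1 := by
    have := hpow_mod (2 * t)
    omega
  by_cases hx : x = 0
  · simp [hx]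
  have hxa : x ^ (q ^ t - 1) = -1 := pow_pred_eq_neg_one_of_pow_eq_neg hx (by omega) hW
  exact pow_ne_one_of_pow_eq_neg_one (FiniteField.neg_one_ne_one_of_odd_card hF_odd) hxa
    (by omega) (by have := hpow_mod k; omega)

theorem stmt_2 (p r q t : ℕ) (hp : p.Prime) (hr : 0 < r)
    (hq : q = p ^ r) (hq4 : q % 4 = 1) (ht : 1 ≤ t)
    (F : Type) [Field F] [Fintype F] (hF : Fintype.card F = q ^ (2 * t)) :
    ∀ (k : ℕ) (x : F), x ^ q ^ t = -x → x ^ (q ^ k + 1) ≠ 1 :=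
  stmt_2_general q t hq4 F hF
end

section
/- Let q be a prime power with q ≡ 3 (mod 4), t odd, k odd, n = 2t, and W = {x ∈ F_{q^n} : x + x^{q^t} = 0}. Then there exists x ∈ W with x^{q^k + 1} = 1. -/
/-!
Since `q ≡ 3 (mod 4)`, the field has `q ^ (2 * t) ≡ 1 (mod 4)` elements, so it contains a square
root `i` of `-1`. The powers of `i` only depend on the exponent mod 4, and both `q ^ t` and `q ^ k`
are `≡ 3 (mod 4)` (odd exponents), so `i ^ q ^ t = i ^ 3 = -i` and `i ^ (q ^ k + 1) = i ^ 4 = 1`.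
-/

lemma Nat.pow_mod_four_of_odd {q s : ℕ} (hq : q % 4 = 3) (hs : Odd s) : q ^ s % 4 = 3 := by
  obtain ⟨c, rfl⟩ := hs
  rw [Nat.pow_mod, hq, pow_succ, pow_mul, Nat.mul_mod, Nat.pow_mod]
  norm_num

lemma Nat.pow_two_mul_mod_four {q : ℕ} (hq : q % 4 = 3) (t : ℕ) : q ^ (2 * t) % 4 = 1 := by
  rw [Nat.pow_mod, hq, pow_mul, Nat.pow_mod]
  norm_num

section SqrtNegOne

variable {R : Type*} [Ring R] {i : R}

lemma pow_four_eq_one_of_sq_eq_neg_one (hi : i ^ 2 = -1) : i ^ 4 = 1 := by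
  rw [show 4 = 2 * 2 from rfl, pow_mul, hi, neg_one_sq]

lemma pow_eq_neg_self_of_sq_eq_neg_one (hi : i ^ 2 = -1) {n : ℕ} (hn : n % 4 = 3) :
    i ^ n = -i := by
  rw [pow_eq_pow_mod n (pow_four_eq_one_of_sq_eq_neg_one hi), hn, pow_succ, hi, neg_one_mul]

lemma pow_eq_one_of_sq_eq_neg_one (hi : i ^ 2 = -1) {n : ℕ} (hn : 4 ∣ n) : i ^ n = 1 := by
  obtain ⟨m, rfl⟩ := hn
  rw [pow_mul, pow_four_eq_one_of_sq_eq_neg_one hi, one_pow]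

end SqrtNegOne

theorem stmt_3_general (q t k : ℕ) (hq4 : q % 4 = 3) (htodd : Odd t) (hkodd : Odd k)
    (F : Type) [Field F] [Fintype F] (hF : Fintype.card F = q ^ (2 * t)) :
    ∃ x : F, x ^ q ^ t = -x ∧ x ^ (q ^ k + 1) = 1 := by
  have hcard : Fintype.card F % 4 ≠ 3 := by
    rw [hF, Nat.pow_two_mul_mod_four hq4]
    decide
  obtain ⟨i, hi⟩ := FiniteField.isSquare_neg_one_iff.mpr hcard
  have hi2 : i ^ 2 = -1 := by rw [hi, sq]
  refine ⟨i, pow_eq_neg_self_of_sq_eq_neg_one hi2 (Nat.pow_mod_four_of_odd hq4 htodd),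
    pow_eq_one_of_sq_eq_neg_one hi2 ?_⟩
  have := Nat.pow_mod_four_of_odd hq4 hkodd
  omega

theorem stmt_3 (p r q t k : ℕ) (hp : p.Prime) (hr : 0 < r)
    (hq : q = p ^ r) (hq4 : q % 4 = 3) (ht : 1 ≤ t) (htodd : Odd t) (hkodd : Odd k)
    (F : Type) [Field F] [Fintype F] (hF : Fintype.card F = q ^ (2 * t)) :
    ∃ x : F, x ^ q ^ t = -x ∧ x ^ (q ^ k + 1) = 1 :=
  stmt_3_general q t k hq4 htodd hkodd F hF
end

section
/- Let q be an odd prime power, n = 2t with t ≥ 3, and ψ(x) = (x^q + x^{q^{t-1}} - x^{q^{t+1}} + x^{q^{2t-1}})/2, viewed as an F_q-linear map on F_{q^n}. Then for every natural number k with 0 ≤ k ≤ t, the k-fold composition of ψ with itself satisfies ψ^{(k)}(x) = (x^{q^k} + x^{q^{t-k}} - x^{q^{t+k}} + x^{q^{2t-k}})/2 for all x ∈ F_{q^n}, where exponents of q are taken modulo 2t. -/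
/-!
Let `σ` be the `q`-Frobenius, so `σ ^ (2 * t) = 1`, and let `τ = σ ^ t`, an involution commuting
with `σ`. In these terms `ψ = ((σ + σ⁻¹) - τ (σ - σ⁻¹)) / 2`, i.e. `ψ` acts as `σ` on the
`(-1)`-eigenspace of `τ` and as `σ⁻¹` on its `(+1)`-eigenspace. Both eigenspaces are `σ`-stable,
so `ψ^[k]` acts on them as `σ ^ k` and `σ⁻¹ ^ k`; splitting `x = (x - τ x) / 2 + (x + τ x) / 2`
gives the formula.
-/

lemma iterateFrobeniusEquiv_pow_apply {R : Type*} [CommSemiring R] (p r : ℕ) [ExpChar R p]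
    [PerfectRing R p] (j : ℕ) (x : R) :
    (iterateFrobeniusEquiv R p r ^ j) x = x ^ (p ^ r) ^ j := by
  rw [iterateFrobeniusEquiv_eq_pow, ← pow_mul, ← iterateFrobeniusEquiv_eq_pow,
    iterateFrobeniusEquiv_def, pow_mul]

namespace RingAut

variable {F : Type*} [Field F] {σ τ : RingAut F} {ψ : F → F}

lemma apply_apply_of_commute (h : Commute σ τ) (x : F) : τ (σ x) = σ (τ x) :=
  (DFunLike.congr_fun h.eq x).symm

lemma apply_add_of_eigen (h2 : (2 : F) ≠ 0) (hστ : Commute σ τ)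
    (hψ : ∀ x, ψ x = (σ x - τ (σ x) + σ⁻¹ x + τ (σ⁻¹ x)) / 2)
    {a b : F} (ha : τ a = -a) (hb : τ b = b) : ψ (a + b) = σ a + σ⁻¹ b := by
  rw [hψ, map_add, map_add, map_add, map_add, apply_apply_of_commute hστ,
    apply_apply_of_commute hστ, apply_apply_of_commute hστ.inv_left,
    apply_apply_of_commute hστ.inv_left, ha, hb, map_neg, map_neg]
  field_simp
  ring

lemma iterate_apply_add_of_eigen (h2 : (2 : F) ≠ 0) (hστ : Commute σ τ)
    (hψ : ∀ x, ψ x = (σ x - τ (σ x) + σ⁻¹ x + τ (σ⁻¹ x)) / 2)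
    {a b : F} (ha : τ a = -a) (hb : τ b = b) (k : ℕ) :
    ψ^[k] (a + b) = (σ ^ k) a + (σ⁻¹ ^ k) b := by
  induction k generalizing a b with
  | zero => rfl
  | succ k ih =>
    have hσa : τ (σ a) = -σ a := by rw [apply_apply_of_commute hστ, ha, map_neg]
    have hσb : τ (σ⁻¹ b) = σ⁻¹ b := by rw [apply_apply_of_commute hστ.inv_left, hb]
    rw [Function.iterate_succ_apply, apply_add_of_eigen h2 hστ hψ ha hb, ih hσa hσb,
      pow_succ, pow_succ, mul_apply, mul_apply]

theorem iterate_apply_of_involution (h2 : (2 : F) ≠ 0) (hτ : τ * τ = 1) (hστ : Commute σ τ)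
    (hψ : ∀ x, ψ x = (σ x - τ (σ x) + σ⁻¹ x + τ (σ⁻¹ x)) / 2) (k : ℕ) (x : F) :
    ψ^[k] x = ((σ ^ k) x - τ ((σ ^ k) x) + (σ ^ k)⁻¹ x + τ ((σ ^ k)⁻¹ x)) / 2 := by
  have hττ (y : F) : τ (τ y) = y := DFunLike.congr_fun hτ y
  have hodd : τ ((x - τ x) / 2) = -((x - τ x) / 2) := by
    rw [map_div₀, map_sub, hττ, map_ofNat]; ring
  have heven : τ ((x + τ x) / 2) = (x + τ x) / 2 := by
    rw [map_div₀, map_add, hττ, map_ofNat]; ring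
  have hx : x = (x - τ x) / 2 + (x + τ x) / 2 := by field_simp; ring
  rw [hx, iterate_apply_add_of_eigen h2 hστ hψ hodd heven, inv_pow, map_div₀, map_div₀,
    map_sub, map_add, map_ofNat, map_ofNat, ← apply_apply_of_commute (hστ.pow_left k),
    ← apply_apply_of_commute (hστ.pow_left k).inv_left, ← hx]
  field_simp
  ring

theorem iterate_apply_of_pow_eq_one {t : ℕ} (ht : 0 < t) (hσ : σ ^ (2 * t) = 1)
    (h2 : (2 : F) ≠ 0)
    (hψ : ∀ x, ψ x = ((σ ^ 1) x + (σ ^ (t - 1)) x - (σ ^ (t + 1)) x + (σ ^ (2 * t - 1)) x) / 2)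
    {k : ℕ} (hk : k ≤ t) (x : F) :
    ψ^[k] x = ((σ ^ k) x + (σ ^ (t - k)) x - (σ ^ (t + k)) x + (σ ^ (2 * t - k)) x) / 2 := by
  have hτ : σ ^ t * σ ^ t = 1 := by rw [← pow_add, ← two_mul, hσ]
  have hpow {j : ℕ} (hj : j ≤ t) : σ ^ (t - j) = σ ^ t * (σ ^ j)⁻¹ ∧
      σ ^ (t + j) = σ ^ t * σ ^ j ∧ σ ^ (2 * t - j) = (σ ^ j)⁻¹ :=
    ⟨pow_sub σ hj, pow_add σ t j, by rw [pow_sub σ (by omega), hσ, one_mul]⟩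
  obtain ⟨h1₁, h1₂, h1₃⟩ := hpow ht
  obtain ⟨hk₁, hk₂, hk₃⟩ := hpow hk
  rw [h1₁, h1₂, h1₃, pow_one] at hψ
  rw [iterate_apply_of_involution h2 hτ (Commute.self_pow σ t)
    (fun x ↦ by rw [hψ, mul_apply, mul_apply]; ring), hk₁, hk₂, hk₃]
  simp only [mul_apply]
  ring

end RingAut

theorem stmt_5_general (p r q t : ℕ) (hp : p.Prime) (hpodd : Odd p)
    (hq : q = p ^ r) (ht : 3 ≤ t)
    (F : Type) [Field F] [Fintype F] (hF : Fintype.card F = q ^ (2 * t))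
    (ψ : F → F)
    (hψ : ∀ x : F, ψ x = (x ^ q ^ 1 + x ^ q ^ (t - 1) - x ^ q ^ (t + 1) + x ^ q ^ (2 * t - 1)) / 2) :
    ∀ k : ℕ, k ≤ t → ∀ x : F,
      ψ^[k] x = (x ^ q ^ (k % (2 * t)) + x ^ q ^ ((t - k) % (2 * t))
        - x ^ q ^ ((t + k) % (2 * t)) + x ^ q ^ ((2 * t - k) % (2 * t))) / 2 := by
  have : Fact p.Prime := ⟨hp⟩
  have : CharP F p := charP_of_card_eq_prime_pow (f := r * (2 * t)) (by rw [hF, hq, ← pow_mul])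
  have h2 : (2 : F) ≠ 0 := Ring.two_ne_zero <| by
    rw [ringChar.eq F p]
    rintro rfl
    exact Nat.not_odd_iff_even.mpr even_two hpodd
  let σ : RingAut F := iterateFrobeniusEquiv F p r
  have hσ_apply (j : ℕ) (x : F) : (σ ^ j) x = x ^ q ^ j :=
    hq ▸ iterateFrobeniusEquiv_pow_apply p r j x
  have hσ : σ ^ (2 * t) = 1 := by
    ext x
    rw [hσ_apply, ← hF, FiniteField.pow_card, RingAut.one_apply]
  have hmod (j : ℕ) (x : F) : x ^ q ^ (j % (2 * t)) = (σ ^ j) x := by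
    rw [← hσ_apply, ← pow_eq_pow_mod j hσ]
  intro k hk x
  simp only [hmod]
  exact RingAut.iterate_apply_of_pow_eq_one (by omega) hσ h2
    (by simpa only [hσ_apply] using hψ) hk x

theorem stmt_5 (p r q t : ℕ) (hp : p.Prime) (hpodd : Odd p) (hr : 0 < r)
    (hq : q = p ^ r) (ht : 3 ≤ t)
    (F : Type) [Field F] [Fintype F] (hF : Fintype.card F = q ^ (2 * t))
    (ψ : F → F)
    (hψ : ∀ x : F, ψ x = (x ^ q ^ 1 + x ^ q ^ (t - 1) - x ^ q ^ (t + 1) + x ^ q ^ (2 * t - 1)) / 2) :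
    ∀ k : ℕ, k ≤ t → ∀ x : F,
      ψ^[k] x = (x ^ q ^ (k % (2 * t)) + x ^ q ^ ((t - k) % (2 * t))
        - x ^ q ^ ((t + k) % (2 * t)) + x ^ q ^ ((2 * t - k) % (2 * t))) / 2 :=
  stmt_5_general p r q t hp hpodd hq ht F hF ψ hψ
end

section
/- Let q be an odd prime power, n = 2t with t ≥ 3, and ψ(x) = (x^q + x^{q^{t-1}} - x^{q^{t+1}} + x^{q^{2t-1}})/2 as an F_q-linear map on F_{q^n}. Then ψ is a bijection of F_{q^n} and the n-fold composition ψ^{(n)} is the identity map; that is, ψ has order dividing n = 2t in the group of F_q-linear automorphisms of F_{q^n}. -/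
/-!
Write `σ` for the Frobenius `x ↦ x ^ q`, so that `σ ^ (2t) = 1`, and `s = σ ^ t`, an involution
commuting with `σ`. With the complementary idempotents `e = (1 - s) / 2` and `1 - e = (1 + s) / 2`
in the ring of additive endomorphisms of `F_{q^n}`, one has `ψ = e σ + (1 - e) σ⁻¹`, where
`σ⁻¹ = σ ^ (2t - 1)`. Hence `ψ ^ k = e σ ^ k + (1 - e) σ ^ (-k)`, and `ψ ^ (2t) = e + (1 - e) = 1`.
-/

theorem IsIdempotentElem.pow_mul_add_one_sub_mul {R : Type*} [Ring R] {e a b : R}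
    (he : IsIdempotentElem e) (ha : Commute e a) (hb : Commute e b) (k : ℕ) :
    (e * a + (1 - e) * b) ^ k = e * a ^ k + (1 - e) * b ^ k := by
  induction k with
  | zero => simp
  | succ k ih =>
    have hb' : Commute (1 - e) b := (Commute.one_left b).sub_left hb
    have hea : e * (e * a + (1 - e) * b) = e * a := by
      rw [mul_add, ← mul_assoc, ← mul_assoc, he.eq, he.mul_one_sub_self, zero_mul, add_zero]
    have heb : (1 - e) * (e * a + (1 - e) * b) = (1 - e) * b := by
      rw [mul_add, ← mul_assoc, ← mul_assoc, he.one_sub_mul_self, he.one_sub.eq, zero_mul,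
        zero_add]
    calc (e * a + (1 - e) * b) ^ (k + 1)
        = a ^ k * (e * (e * a + (1 - e) * b)) + b ^ k * ((1 - e) * (e * a + (1 - e) * b)) := by
          rw [pow_succ, ih, add_mul, ← mul_assoc, ← mul_assoc, (ha.pow_right k).eq,
            (hb'.pow_right k).eq]
      _ = e * a ^ (k + 1) + (1 - e) * b ^ (k + 1) := by
          rw [hea, heb, ← mul_assoc, ← mul_assoc, ← (ha.pow_right k).eq, ← (hb'.pow_right k).eq,
            mul_assoc, mul_assoc, ← pow_succ, ← pow_succ]

theorem Function.bijective_of_iterate_eq_id {α : Type*} {f : α → α} {n : ℕ} (hn : n ≠ 0)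
    (h : f^[n] = id) : Bijective f := by
  obtain ⟨m, rfl⟩ := Nat.exists_eq_succ_of_ne_zero hn
  refine bijective_iff_has_inverse.mpr ⟨f^[m], fun x => ?_, fun x => ?_⟩
  · rw [← iterate_succ_apply, h, id]
  · rw [← iterate_succ_apply' f m, h, id]

section HalfTwist

variable {F : Type*} [Field F]

def halfTwist (σ : F →+* F) (t : ℕ) (x : F) : F :=
  (σ x + (σ ^ (t - 1)) x - (σ ^ (t + 1)) x + (σ ^ (2 * t - 1)) x) / 2

theorem halfTwist_iterate_two_mul_eq_id {σ : F →+* F} {t : ℕ} (ht : 0 < t)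
    (hσ : σ ^ (2 * t) = 1) (h2 : (2 : F) ≠ 0) : (halfTwist σ t)^[2 * t] = id := by
  have hpow : ∀ m n x, (σ ^ m) ((σ ^ n) x) = (σ ^ (m + n)) x := fun m n x => by
    rw [pow_add, RingHom.coe_mul, Function.comp_apply]
  have hinv : σ ^ (t + (2 * t - 1)) = σ ^ (t - 1) := by
    rw [show t + (2 * t - 1) = 2 * t + (t - 1) by omega, pow_add, hσ, one_mul]
  let S : Module.End ℤ F := σ.toAddMonoidHom.toIntLinearMap
  let e : Module.End ℤ F := (2⁻¹ : F) • (1 - S ^ t)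
  have hS : ∀ k x, (S ^ k) x = (σ ^ k) x := fun k x => by simp [S, Module.End.pow_apply]
  have hS2t : S ^ (2 * t) = 1 := LinearMap.ext fun x => by
    rw [hS, hσ, RingHom.coe_one, id, Module.End.one_apply]
  have he : ∀ x, e x = (x - (σ ^ t) x) / 2 := fun x => by
    simp only [e, LinearMap.smul_apply, LinearMap.sub_apply, Module.End.one_apply, hS,
      smul_eq_mul]
    ring
  have he_idem : IsIdempotentElem e := by
    ext x
    rw [Module.End.mul_apply, he, he, map_div₀, map_sub, map_ofNat, hpow, ← two_mul, hσ,
      RingHom.coe_one, id]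
    field_simp
    ring
  have he_comm : Commute e S := by
    ext x
    rw [← pow_one S, Module.End.mul_apply, Module.End.mul_apply, he, he, hS, hS, map_div₀,
      map_sub, map_ofNat, hpow, hpow, add_comm]
  have hdecomp : ⇑(e * S + (1 - e) * S ^ (2 * t - 1)) = halfTwist σ t := by
    ext x
    rw [← pow_one S, LinearMap.add_apply, Module.End.mul_apply, Module.End.mul_apply,
      LinearMap.sub_apply, Module.End.one_apply, ← pow_mul, one_mul, he, he, hS, hS, hpow, hpow,
      hinv, pow_one, halfTwist]
    field_simp
    ring
  have hSinv : (S ^ (2 * t - 1)) ^ (2 * t) = 1 := by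
    rw [← pow_mul, mul_comm, pow_mul, hS2t, one_pow]
  rw [← hdecomp, ← Module.End.coe_pow,
    he_idem.pow_mul_add_one_sub_mul he_comm (he_comm.pow_right _), hS2t, hSinv, mul_one, mul_one,
    add_sub_cancel, Module.End.one_eq_id, LinearMap.id_coe]

end HalfTwist

theorem stmt_6_general (p r q t : ℕ) (hp : p.Prime) (hpodd : Odd p)
    (hq : q = p ^ r) (ht : 3 ≤ t)
    (F : Type) [Field F] [Fintype F] (hF : Fintype.card F = q ^ (2 * t))
    (ψ : F → F)
    (hψ : ∀ x : F, ψ x = (x ^ q ^ 1 + x ^ q ^ (t - 1) - x ^ q ^ (t + 1) + x ^ q ^ (2 * t - 1)) / 2) :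
    Function.Bijective ψ ∧ ψ^[2 * t] = id := by
  have := Fact.mk hp
  have hcard : Fintype.card F = p ^ (r * (2 * t)) := by rw [hF, hq, ← pow_mul]
  have : CharP F p := charP_of_card_eq_prime_pow hcard
  have h2 : (2 : F) ≠ 0 := Ring.two_ne_zero <| by
    have := Nat.odd_iff.mp (hpodd.pow (n := r * (2 * t)))
    rw [Ne, FiniteField.even_card_iff_char_two, hcard]
    omega
  let σ := iterateFrobenius F p r
  have hσ : ∀ k x, (σ ^ k) x = x ^ q ^ k := by
    intro k x
    induction k with
    | zero => simp
    | succ k ih => rw [pow_succ', RingHom.coe_mul, Function.comp_apply, ih, iterateFrobenius_def,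
        ← hq, ← pow_mul, ← pow_succ]
  have hσ2t : σ ^ (2 * t) = 1 := RingHom.ext fun x => by
    rw [hσ, ← hF, FiniteField.pow_card, RingHom.one_def, RingHom.id_apply]
  have hσ1 : ∀ x, σ x = x ^ q := fun x => by simpa using hσ 1 x
  have hψσ : ψ = halfTwist σ t := funext fun x => by simp only [hψ, halfTwist, hσ, hσ1, pow_one]
  have hid := halfTwist_iterate_two_mul_eq_id (by omega) hσ2t h2
  rw [hψσ]
  exact ⟨Function.bijective_of_iterate_eq_id (by omega) hid, hid⟩

theorem stmt_6 (p r q t : ℕ) (hp : p.Prime) (hpodd : Odd p) (hr : 0 < r)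
    (hq : q = p ^ r) (ht : 3 ≤ t)
    (F : Type) [Field F] [Fintype F] (hF : Fintype.card F = q ^ (2 * t))
    (ψ : F → F)
    (hψ : ∀ x : F, ψ x = (x ^ q ^ 1 + x ^ q ^ (t - 1) - x ^ q ^ (t + 1) + x ^ q ^ (2 * t - 1)) / 2) :
    Function.Bijective ψ ∧ ψ^[2 * t] = id :=
  stmt_6_general p r q t hp hpodd hq ht F hF ψ hψ
end

section
/- Let q be an odd prime power, n = 2t with t ≥ 3, and ψ(x) = (x^q + x^{q^{t-1}} - x^{q^{t+1}} + x^{q^{2t-1}})/2 as an F_q-linear map on F_{q^n}. Then ψ has order exactly n = 2t in the group of F_q-linear automorphisms of F_{q^n}: ψ^{(n)} = id but ψ^{(m)} ≠ id for all 1 ≤ m < n. -/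
/-!
Let `σ` be the `q`-Frobenius, so that `σ^(2t) = id`. Since `2` is invertible, `F` splits into the
eigenspaces `V₊` and `V₋` of the involution `σ^t`; on `V₋` the map `ψ` acts as `σ`, on `V₊` as
`σ^(t-1)`, and both have order dividing `2t`. Conversely, if `ψ^m = id` then `σ^m` fixes `V₋`, and
since `V₋` contains a nonzero `w` with `w * V₊ ⊆ V₋`, it also fixes `V₊`; so `σ^m = id`, which for
`0 < m < 2t` is impossible because `Fˣ` is cyclic of order `q^(2t) - 1`.
-/

section TwistMap

variable {F : Type*} [Field F] (σ : F →+* F) (t : ℕ)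

def twistMap : F →+ F where
  toFun x := (σ x + σ^[t - 1] x - σ^[t + 1] x + σ^[2 * t - 1] x) / 2
  map_zero' := by simp
  map_add' x y := by simp only [map_add, iterate_map_add]; ring

variable {σ t}

lemma iterate_eq_neg_of_iterate_eq_neg {z : F} (hz : σ^[t] z = -z) (k : ℕ) :
    σ^[t] (σ^[k] z) = -σ^[k] z := by
  rw [← Function.iterate_add_apply, add_comm, Function.iterate_add_apply, hz, iterate_map_neg]

lemma iterate_eq_self_of_iterate_eq_self {z : F} (hz : σ^[t] z = z) (k : ℕ) :
    σ^[t] (σ^[k] z) = σ^[k] z := by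
  rw [← Function.iterate_add_apply, add_comm, Function.iterate_add_apply, hz]

variable (h2 : (2 : F) ≠ 0) (ht : 1 ≤ t)
include h2 ht

lemma twistMap_of_iterate_eq_neg {z : F} (hz : σ^[t] z = -z) : twistMap σ t z = σ z := by
  have h₁ : σ^[t + 1] z = -σ z := by
    rw [add_comm, Function.iterate_add_apply, hz, Function.iterate_one, map_neg]
  have h₂ : σ^[2 * t - 1] z = -σ^[t - 1] z := by
    rw [show 2 * t - 1 = t - 1 + t by omega, Function.iterate_add_apply, hz, iterate_map_neg]
  simp only [twistMap, AddMonoidHom.coe_mk, ZeroHom.coe_mk, h₁, h₂]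
  field_simp
  ring

lemma twistMap_of_iterate_eq_self {z : F} (hz : σ^[t] z = z) :
    twistMap σ t z = σ^[t - 1] z := by
  have h₁ : σ^[t + 1] z = σ z := by
    rw [add_comm, Function.iterate_add_apply, hz, Function.iterate_one]
  have h₂ : σ^[2 * t - 1] z = σ^[t - 1] z := by
    rw [show 2 * t - 1 = t - 1 + t by omega, Function.iterate_add_apply, hz]
  simp only [twistMap, AddMonoidHom.coe_mk, ZeroHom.coe_mk, h₁, h₂]
  field_simp
  ring

lemma iterate_twistMap_of_iterate_eq_neg {z : F} (hz : σ^[t] z = -z) (m : ℕ) :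
    (twistMap σ t)^[m] z = σ^[m] z := by
  induction m with
  | zero => rfl
  | succ m ih =>
    rw [Function.iterate_succ_apply', ih,
      twistMap_of_iterate_eq_neg h2 ht (iterate_eq_neg_of_iterate_eq_neg hz m),
      Function.iterate_succ_apply']

lemma iterate_twistMap_of_iterate_eq_self {z : F} (hz : σ^[t] z = z) (m : ℕ) :
    (twistMap σ t)^[m] z = σ^[(t - 1) * m] z := by
  induction m with
  | zero => rfl
  | succ m ih =>
    rw [Function.iterate_succ_apply', ih,
      twistMap_of_iterate_eq_self h2 ht (iterate_eq_self_of_iterate_eq_self hz _),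
      ← Function.iterate_add_apply, Nat.mul_succ, add_comm]

omit ht in
lemma eq_id_of_fixes_eigenspaces (hσ : σ^[2 * t] = id) {f : F → F}
    (hf : ∀ x y, f (x + y) = f x + f y) (hpos : ∀ z, σ^[t] z = z → f z = z)
    (hneg : ∀ z, σ^[t] z = -z → f z = z) : f = id := by
  have hσσ (x : F) : σ^[t] (σ^[t] x) = x := by
    rw [← Function.iterate_add_apply, ← two_mul, hσ, id]
  funext x
  have hsplit : x = (x + σ^[t] x) / 2 + (x - σ^[t] x) / 2 := by field_simp; ring
  rw [id, hsplit, hf, hpos, hneg, ← hsplit]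
  all_goals
    rw [← RingHom.coe_pow]
    simp only [map_div₀, map_add, map_sub, map_ofNat, RingHom.coe_pow, hσσ]
    ring

omit h2 ht in
lemma exists_ne_zero_iterate_eq_neg (hσ : σ^[2 * t] = id) (hσt : σ^[t] ≠ id) :
    ∃ w : F, w ≠ 0 ∧ σ^[t] w = -w := by
  obtain ⟨x, hx⟩ := Function.ne_iff.mp hσt
  refine ⟨x - σ^[t] x, sub_ne_zero.mpr (Ne.symm hx), ?_⟩
  rw [iterate_map_sub, ← Function.iterate_add_apply, ← two_mul, hσ, id, neg_sub]

lemma iterate_twistMap_two_mul (hσ : σ^[2 * t] = id) : (twistMap σ t)^[2 * t] = id :=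
  eq_id_of_fixes_eigenspaces h2 hσ (iterate_map_add _ _)
    (fun z hz => by
      rw [iterate_twistMap_of_iterate_eq_self h2 ht hz, mul_comm, Function.iterate_mul, hσ,
        Function.iterate_id, id])
    (fun z hz => by rw [iterate_twistMap_of_iterate_eq_neg h2 ht hz, hσ, id])

lemma iterate_eq_id_of_iterate_twistMap_eq_id (hσ : σ^[2 * t] = id) (hσt : σ^[t] ≠ id) {m : ℕ}
    (hm : (twistMap σ t)^[m] = id) : σ^[m] = id := by
  have hneg (z : F) (hz : σ^[t] z = -z) : σ^[m] z = z := by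
    rw [← iterate_twistMap_of_iterate_eq_neg h2 ht hz, hm, id]
  obtain ⟨w, hw0, hw⟩ := exists_ne_zero_iterate_eq_neg hσ hσt
  refine eq_id_of_fixes_eigenspaces h2 hσ (iterate_map_add _ _) (fun u hu => ?_) hneg
  have hwu : σ^[m] (w * u) = w * u := hneg _ (by rw [iterate_map_mul, hw, hu, neg_mul])
  rw [iterate_map_mul, hneg w hw] at hwu
  exact mul_left_cancel₀ hw0 hwu

end TwistMap

lemma iterate_iterateFrobenius_apply {R : Type*} [CommSemiring R] (p : ℕ) [ExpChar R p]
    (r k : ℕ) (x : R) : (iterateFrobenius R p r)^[k] x = x ^ (p ^ r) ^ k := by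
  rw [coe_iterateFrobenius, ← Function.iterate_mul, ← coe_iterateFrobenius, iterateFrobenius_def,
    pow_mul]

lemma FiniteField.exists_pow_ne_self {K : Type*} [Field K] [Fintype K] {N : ℕ} (hN : 1 < N)
    (hNK : N < Fintype.card K) : ∃ x : K, x ^ N ≠ x := by
  obtain ⟨u, hu⟩ := exists_pow_ne_one_of_isCyclic (G := Kˣ) (k := N - 1) (by omega)
    (by rw [Nat.card_units, Nat.card_eq_fintype_card]; omega)
  refine ⟨u, fun h => hu (Units.ext ?_)⟩
  rw [Units.val_pow_eq_pow_val, Units.val_one, ← mul_left_inj' u.ne_zero, ← pow_succ,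
    Nat.sub_add_cancel hN.le, h, one_mul]

theorem stmt_7 (p r q t : ℕ) (hp : p.Prime) (hpodd : Odd p) (hr : 0 < r)
    (hq : q = p ^ r) (ht : 3 ≤ t)
    (F : Type) [Field F] [Fintype F] (hF : Fintype.card F = q ^ (2 * t))
    (ψ : F → F)
    (hψ : ∀ x : F, ψ x = (x ^ q ^ 1 + x ^ q ^ (t - 1) - x ^ q ^ (t + 1) + x ^ q ^ (2 * t - 1)) / 2) :
    ψ^[2 * t] = id ∧ ∀ m : ℕ, 1 ≤ m → m < 2 * t → ψ^[m] ≠ id := by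
  have : Fact p.Prime := ⟨hp⟩
  have : CharP F p := charP_of_card_eq_prime_pow (f := r * (2 * t)) (by rw [hF, hq, ← pow_mul])
  set σ := iterateFrobenius F p r
  have hσ_apply (k : ℕ) (x : F) : σ^[k] x = x ^ q ^ k := by
    rw [iterate_iterateFrobenius_apply, hq]
  have hψσ : ψ = twistMap σ t := by
    funext x
    simp only [hψ, twistMap, AddMonoidHom.coe_mk, ZeroHom.coe_mk, ← hσ_apply, Function.iterate_one]
  have h2 : (2 : F) ≠ 0 := by
    have hp2 : ¬p ∣ 2 := fun h => by
      rw [(Nat.prime_dvd_prime_iff_eq hp Nat.prime_two).mp h] at hpodd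
      exact absurd hpodd (by decide)
    exact_mod_cast (CharP.cast_eq_zero_iff F p 2).not.mpr hp2
  have hq1 : 1 < q := hq ▸ Nat.one_lt_pow hr.ne' hp.one_lt
  have hσ : σ^[2 * t] = id := funext fun x => by rw [hσ_apply, ← hF, FiniteField.pow_card, id]
  have hσ_ne (k : ℕ) (hk : 1 ≤ k) (hk' : k < 2 * t) : σ^[k] ≠ id := fun h => by
    obtain ⟨x, hx⟩ := FiniteField.exists_pow_ne_self (K := F) (Nat.one_lt_pow (by omega) hq1)
      (hF ▸ Nat.pow_lt_pow_right hq1 hk')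
    exact hx (by rw [← hσ_apply, h, id])
  rw [hψσ]
  exact ⟨iterate_twistMap_two_mul h2 (by omega) hσ, fun m hm hm' h =>
    hσ_ne m hm hm' (iterate_eq_id_of_iterate_twistMap_eq_id h2 (by omega) hσ
      (hσ_ne t (by omega) (by omega)) h)⟩
end

section
/- Let q be an odd prime power, t ≥ 3 even, n = 2t, and ψ(x) = (x^q + x^{q^{t-1}} - x^{q^{t+1}} + x^{q^{2t-1}})/2 ∈ F_{q^n}[x]. Then ψ is a scattered q-polynomial: for all nonzero y, z ∈ F_{q^n}, if ψ(y)/y = ψ(z)/z then y and z are F_q-linearly dependent. -/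
/-!
Let `σ x = x ^ q ^ t`, an involution of `F`, and split `F = K ⊕ A` into the fixed field
`K = 𝔽_{q^t}` of `σ` and its `(-1)`-eigenspace `A`. Writing `2y = a + b` with `a ∈ K`, `b ∈ A` gives
`2ψ(y) = a ^ q ^ (t-1) + b ^ q`, so applying `σ` splits `ψ(y)/y = ψ(z)/z` into two equations
between the components of `y` and `z`. Every configuration of these equations other than
`z ∈ 𝔽_q y` leads to a contradiction: either to `N = -N` for the norm
`N x = x ^ (1 + q + ⋯ + q^(t-1))`, which satisfies `N (x ^ q) = N x` on `K` and `N (x ^ q) = -N x`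
on `A`; or to `a ^ (q^(t-1) + 1) = b ^ (q+1)` with `a, b ≠ 0`, which is impossible because `q + 1`
divides both `q^(t-1) + 1` and `q^t - 1` for even `t`, so that `b / a ^ k` would be a nonzero
element of `K ∩ A`.
-/

open Finset

section Norm

variable {F : Type*} [Field F] {q t : ℕ}

theorem pow_pow_geomSum_of_pow_pow_eq_mul {x ε : F} (hx : x ≠ 0) (h : x ^ q ^ t = ε * x) :
    (x ^ q) ^ (∑ i ∈ range t, q ^ i) = ε * x ^ (∑ i ∈ range t, q ^ i) := by
  have hexp : q * ∑ i ∈ range t, q ^ i + 1 = (∑ i ∈ range t, q ^ i) + q ^ t := by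
    rw [← geom_sum_succ, geom_sum_succ', add_comm]
  refine mul_right_cancel₀ hx ?_
  calc (x ^ q) ^ (∑ i ∈ range t, q ^ i) * x = x ^ ((∑ i ∈ range t, q ^ i) + q ^ t) := by
        rw [← pow_mul, ← pow_succ, hexp]
    _ = ε * x ^ (∑ i ∈ range t, q ^ i) * x := by rw [pow_add, h]; ring

theorem pow_pow_pow_geomSum_of_pow_pow_eq {x : F} (hx : x ≠ 0) (h : x ^ q ^ t = x) (j : ℕ) :
    (x ^ q ^ j) ^ (∑ i ∈ range t, q ^ i) = x ^ (∑ i ∈ range t, q ^ i) := by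
  induction j generalizing x with
  | zero => rw [pow_zero, pow_one]
  | succ j ih =>
    rw [pow_succ', pow_mul, ih (pow_ne_zero q hx) (by rw [pow_right_comm, h]),
      pow_pow_geomSum_of_pow_pow_eq_mul hx (h.trans (one_mul x).symm), one_mul]

theorem pow_pow_sub_one_pow_of_pow_pow_eq (ht0 : t ≠ 0) {x : F} (h : x ^ q ^ t = x) :
    (x ^ q ^ (t - 1)) ^ q = x := by
  rw [← pow_mul, ← pow_succ, Nat.sub_add_cancel (Nat.pos_of_ne_zero ht0), h]

theorem mul_mul_eq_zero_of_pow_pow_mul_mul_eq (h2 : (2 : F) ≠ 0) {x₁ x₂ x₃ : F} {j : ℕ}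
    (h₁ : x₁ ^ q ^ t = x₁) (h₂ : x₂ ^ q ^ t = -x₂) (h₃ : x₃ ^ q ^ t = x₃)
    (h : x₁ ^ q ^ j * x₂ * x₃ = x₂ ^ q * x₁ * x₃ ^ q) : x₁ * x₂ * x₃ = 0 := by
  by_contra hne
  obtain ⟨⟨hx₁, hx₂⟩, hx₃⟩ := mul_ne_zero_iff.mp hne |>.imp_left mul_ne_zero_iff.mp
  have hN := congrArg (· ^ ∑ i ∈ range t, q ^ i) h
  simp only [mul_pow] at hN
  rw [pow_pow_pow_geomSum_of_pow_pow_eq hx₁ h₁,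
    pow_pow_geomSum_of_pow_pow_eq_mul hx₂ (h₂.trans (neg_one_mul x₂).symm),
    pow_pow_geomSum_of_pow_pow_eq_mul hx₃ (h₃.trans (one_mul x₃).symm)] at hN
  exact mul_ne_zero h2 (pow_ne_zero _ hne) (by linear_combination hN)

theorem pow_pow_mul_self_ne_pow_succ (h2 : (2 : F) ≠ 0) (ht : Even t) (ht0 : t ≠ 0)
    {x₁ x₂ : F} (hx₁ : x₁ ≠ 0) (hx₂ : x₂ ≠ 0) (h₁ : x₁ ^ q ^ t = x₁) (h₂ : x₂ ^ q ^ t = -x₂) :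
    x₁ ^ q ^ (t - 1) * x₁ ≠ x₂ ^ (q + 1) := by
  intro h
  obtain ⟨k, hk⟩ : q + 1 ∣ q ^ (t - 1) + 1 := by
    simpa using (Nat.Even.sub_odd (by omega) ht odd_one).nat_add_dvd_pow_add_pow q 1
  set v := x₂ / x₁ ^ k
  have hv : v ≠ 0 := div_ne_zero hx₂ (pow_ne_zero k hx₁)
  have hv1 : v ^ (q + 1) = 1 := by
    rw [div_pow, ← pow_mul, mul_comm k, ← hk, pow_succ x₁, h, div_self (pow_ne_zero _ hx₂)]
  have hvA : v ^ q ^ t = -v := by rw [div_pow, pow_right_comm, h₁, h₂, neg_div]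
  -- `v ^ q ^ t * v ^ q = 1 = v * v ^ q` because `q + 1 ∣ q ^ t + q`
  have hvK : v ^ q ^ t = v := by
    have hexp : q ^ t + q = (q + 1) * (q * k) := by
      rw [mul_left_comm, ← hk, mul_add, ← pow_succ', Nat.sub_add_cancel (by omega), mul_one]
    refine mul_right_cancel₀ (pow_ne_zero q hv) ?_
    rw [← pow_add, hexp, pow_mul, hv1, one_pow, ← pow_succ', hv1]
  exact hv ((mul_eq_zero.mp (by linear_combination hvA - hvK : (2 : F) * v = 0)).resolve_left h2)

end Norm

section Frobenius

variable {F : Type*} [Field F] {p r q t : ℕ} [ExpChar F p]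

theorem add_pow_pow_of_eq_pow (hq : q = p ^ r) (x y : F) (j : ℕ) :
    (x + y) ^ q ^ j = x ^ q ^ j + y ^ q ^ j := by
  rw [hq, ← pow_mul]
  exact add_pow_expChar_pow x y p _

theorem sub_pow_pow_of_eq_pow (hq : q = p ^ r) (x y : F) (j : ℕ) :
    (x - y) ^ q ^ j = x ^ q ^ j - y ^ q ^ j := by
  rw [hq, ← pow_mul]
  exact sub_pow_expChar_pow x y _

theorem add_pow_pow_self_pow_pow (hq : q = p ^ r) {x : F} (hx : x ^ q ^ (2 * t) = x) :
    (x + x ^ q ^ t) ^ q ^ t = x + x ^ q ^ t := by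
  rw [add_pow_pow_of_eq_pow hq, ← pow_mul, ← pow_add, ← two_mul, hx, add_comm]

theorem sub_pow_pow_self_pow_pow (hq : q = p ^ r) {x : F} (hx : x ^ q ^ (2 * t) = x) :
    (x - x ^ q ^ t) ^ q ^ t = -(x - x ^ q ^ t) := by
  rw [sub_pow_pow_of_eq_pow hq, ← pow_mul, ← pow_add, ← two_mul, hx, neg_sub]

theorem add_pow_pow_pow_add_sub_pow_pow (hq : q = p ^ r) (x : F) :
    (x + x ^ q ^ t) ^ q ^ (t - 1) + (x - x ^ q ^ t) ^ q =
      x ^ q ^ 1 + x ^ q ^ (t - 1) - x ^ q ^ (t + 1) + x ^ q ^ (2 * t - 1) := by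
  have hfrob : (x - x ^ q ^ t) ^ q = x ^ q - (x ^ q ^ t) ^ q := by
    simpa using sub_pow_pow_of_eq_pow hq x (x ^ q ^ t) 1
  rw [add_pow_pow_of_eq_pow hq, hfrob, ← pow_mul, ← pow_add, ← pow_mul, ← pow_succ,
    show t + (t - 1) = 2 * t - 1 by omega, pow_one]
  ring

theorem eq_and_eq_of_mul_eq (hq : q = p ^ r) (hqodd : Odd q) (h2 : (2 : F) ≠ 0) {a b c d : F}
    (ha : a ^ q ^ t = a) (hb : b ^ q ^ t = -b) (hc : c ^ q ^ t = c) (hd : d ^ q ^ t = -d)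
    (h : (a ^ q ^ (t - 1) + b ^ q) * (c + d) = (c ^ q ^ (t - 1) + d ^ q) * (a + b)) :
    a ^ q ^ (t - 1) * c + b ^ q * d = c ^ q ^ (t - 1) * a + d ^ q * b ∧
      a ^ q ^ (t - 1) * d + b ^ q * c = c ^ q ^ (t - 1) * b + d ^ q * a := by
  have hσ : (a ^ q ^ (t - 1) - b ^ q) * (c - d) = (c ^ q ^ (t - 1) - d ^ q) * (a - b) := by
    have h' := congrArg (· ^ q ^ t) h
    simp only [mul_pow, add_pow_pow_of_eq_pow hq] at h'
    rw [pow_right_comm a, pow_right_comm b, pow_right_comm c, pow_right_comm d,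
      ha, hb, hc, hd, hqodd.neg_pow, hqodd.neg_pow] at h'
    linear_combination h'
  constructor <;> refine mul_left_cancel₀ h2 ?_
  · linear_combination h + hσ
  · linear_combination h - hσ

variable {a b c d : F}

theorem exists_pow_eq_self_of_ne_zero (hq : q = p ^ r) (h2 : (2 : F) ≠ 0) (ht : Even t)
    (ht0 : t ≠ 0) (ha0 : a ≠ 0) (hb0 : b ≠ 0)
    (ha : a ^ q ^ t = a) (hb : b ^ q ^ t = -b) (hc : c ^ q ^ t = c) (hd : d ^ q ^ t = -d)
    (hK : a ^ q ^ (t - 1) * c + b ^ q * d = c ^ q ^ (t - 1) * a + d ^ q * b)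
    (hA : a ^ q ^ (t - 1) * d + b ^ q * c = c ^ q ^ (t - 1) * b + d ^ q * a) :
    ∃ s : F, s ^ q = s ∧ c + d = s * (a + b) := by
  obtain ⟨s, rfl⟩ : ∃ s, c = s * a := ⟨c / a, (div_mul_cancel₀ c ha0).symm⟩
  obtain ⟨u, rfl⟩ : ∃ u, d = u * b := ⟨d / b, (div_mul_cancel₀ d hb0).symm⟩
  rw [mul_pow, ha] at hc
  rw [mul_pow, hb] at hd
  have hs : s ^ q ^ t = s := mul_right_cancel₀ ha0 hc
  have hu : u ^ q ^ t = u := mul_right_cancel₀ (neg_ne_zero.mpr hb0) (by linear_combination hd)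
  have hsq := pow_pow_sub_one_pow_of_pow_pow_eq ht0 hs
  have hus : u = s ^ q ^ (t - 1) := by
    have hv : (u - s ^ q ^ (t - 1)) ^ q ^ t = u - s ^ q ^ (t - 1) := by
      rw [sub_pow_pow_of_eq_pow hq, hu, pow_right_comm, hs]
    have hvq : (u - s ^ q ^ (t - 1)) ^ q = u ^ q - s := by
      simpa [hsq] using sub_pow_pow_of_eq_pow hq u (s ^ q ^ (t - 1)) 1
    have := mul_mul_eq_zero_of_pow_pow_mul_mul_eq h2 ha hb hv (j := t - 1)
      (by rw [hvq]; linear_combination hA)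
    simpa [ha0, hb0, sub_eq_zero] using this
  have hs' : s ^ q ^ (t - 1) = s := by
    subst hus
    have hfac : (a ^ q ^ (t - 1) * a - b ^ (q + 1)) * (s - s ^ q ^ (t - 1)) = 0 := by
      rw [mul_pow, mul_pow, hsq] at hK
      linear_combination hK
    rcases mul_eq_zero.mp hfac with h | h
    · exact absurd (sub_eq_zero.mp h) (pow_pow_mul_self_ne_pow_succ h2 ht ht0 ha0 hb0 ha hb)
    · exact (sub_eq_zero.mp h).symm
  refine ⟨s, by rwa [hs'] at hsq, ?_⟩
  rw [hus, hs']
  ring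

theorem exists_pow_eq_self_of_mul_eq (hq : q = p ^ r) (hqodd : Odd q) (h2 : (2 : F) ≠ 0)
    (ht : Even t) (ht0 : t ≠ 0)
    (ha : a ^ q ^ t = a) (hb : b ^ q ^ t = -b) (hc : c ^ q ^ t = c) (hd : d ^ q ^ t = -d)
    (hab : a + b ≠ 0)
    (h : (a ^ q ^ (t - 1) + b ^ q) * (c + d) = (c ^ q ^ (t - 1) + d ^ q) * (a + b)) :
    ∃ s : F, s ^ q = s ∧ c + d = s * (a + b) := by
  obtain ⟨hK, hA⟩ := eq_and_eq_of_mul_eq hq hqodd h2 ha hb hc hd h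
  have hq0 : q ≠ 0 := hqodd.pos.ne'
  rcases eq_or_ne a 0 with rfl | ha0
  · have hb0 : b ≠ 0 := by simpa using hab
    rw [zero_pow (pow_ne_zero _ hq0)] at hK hA
    simp only [zero_mul, mul_zero, zero_add, add_zero] at hK hA
    obtain rfl : c = 0 := by
      simpa [hb0] using mul_mul_eq_zero_of_pow_pow_mul_mul_eq h2 hc hb (one_pow _) (j := t - 1)
        (by linear_combination -hA)
    refine ⟨d / b, ?_, by simp [hb0]⟩
    rw [div_pow, div_eq_div_iff (pow_ne_zero _ hb0) hb0]
    linear_combination -hK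
  rcases eq_or_ne b 0 with rfl | hb0
  · rw [zero_pow hq0] at hK hA
    simp only [zero_mul, mul_zero, zero_add, add_zero] at hK hA
    obtain rfl : d = 0 := by
      simpa [ha0] using mul_mul_eq_zero_of_pow_pow_mul_mul_eq h2 ha hd (one_pow _) (j := t - 1)
        (by linear_combination hA)
    have hs : (c / a) ^ q ^ t = c / a := by rw [div_pow, ha, hc]
    have hs' : (c / a) ^ q ^ (t - 1) = c / a := by
      rw [div_pow, div_eq_div_iff (pow_ne_zero _ ha0) ha0]
      linear_combination -hK
    refine ⟨c / a, ?_, by simp [ha0]⟩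
    simpa [hs'] using pow_pow_sub_one_pow_of_pow_pow_eq ht0 hs
  exact exists_pow_eq_self_of_ne_zero hq h2 ht ht0 ha0 hb0 ha hb hc hd hK hA

end Frobenius

theorem stmt_8_general (p r q t : ℕ) (hp : p.Prime) (hpodd : Odd p)
    (hq : q = p ^ r) (ht : 3 ≤ t) (hteven : Even t)
    (F : Type) [Field F] [Fintype F] (hF : Fintype.card F = q ^ (2 * t))
    (ψ : F → F)
    (hψ : ∀ x : F, ψ x = (x ^ q ^ 1 + x ^ q ^ (t - 1) - x ^ q ^ (t + 1) + x ^ q ^ (2 * t - 1)) / 2) :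
    ∀ y z : F, y ≠ 0 → z ≠ 0 → ψ y / y = ψ z / z →
      ∃ c : F, c ^ q = c ∧ z = c * y := by
  intro y z hy hz hyz
  have : Fact p.Prime := ⟨hp⟩
  have : CharP F p := charP_of_card_eq_prime_pow (f := r * (2 * t)) (by rw [hF, hq, ← pow_mul])
  have h2 : (2 : F) ≠ 0 := Ring.two_ne_zero (by rw [ringChar.eq F p]; rintro rfl; norm_num at hpodd)
  have hqodd : Odd q := hq ▸ hpodd.pow
  have hfix (x : F) : x ^ q ^ (2 * t) = x := hF ▸ FiniteField.pow_card x
  have h2ψ (x : F) : 2 * ψ x = (x + x ^ q ^ t) ^ q ^ (t - 1) + (x - x ^ q ^ t) ^ q := by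
    rw [hψ, add_pow_pow_pow_add_sub_pow_pow hq, mul_div_cancel₀ _ h2]
  obtain ⟨s, hs, hzs⟩ := exists_pow_eq_self_of_mul_eq hq hqodd h2 hteven (by omega)
    (add_pow_pow_self_pow_pow hq (hfix y)) (sub_pow_pow_self_pow_pow hq (hfix y))
    (add_pow_pow_self_pow_pow hq (hfix z)) (sub_pow_pow_self_pow_pow hq (hfix z))
    (by simpa [← two_mul] using mul_ne_zero h2 hy)
    (by rw [← h2ψ, ← h2ψ]; linear_combination 4 * (div_eq_div_iff hy hz).mp hyz)
  exact ⟨s, hs, mul_left_cancel₀ h2 (by linear_combination hzs)⟩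

theorem stmt_8 (p r q t : ℕ) (hp : p.Prime) (hpodd : Odd p) (hr : 0 < r)
    (hq : q = p ^ r) (ht : 3 ≤ t) (hteven : Even t)
    (F : Type) [Field F] [Fintype F] (hF : Fintype.card F = q ^ (2 * t))
    (ψ : F → F)
    (hψ : ∀ x : F, ψ x = (x ^ q ^ 1 + x ^ q ^ (t - 1) - x ^ q ^ (t + 1) + x ^ q ^ (2 * t - 1)) / 2) :
    ∀ y z : F, y ≠ 0 → z ≠ 0 → ψ y / y = ψ z / z →
      ∃ c : F, c ^ q = c ∧ z = c * y :=
  stmt_8_general p r q t hp hpodd hq ht hteven F hF ψ hψ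
end

section
/- Let q ≡ 1 (mod 4), t ≥ 3 odd, n = 2t, and ψ(x) = (x^q + x^{q^{t-1}} - x^{q^{t+1}} + x^{q^{2t-1}})/2 ∈ F_{q^n}[x]. Then ψ is a scattered q-polynomial: for all nonzero y, z ∈ F_{q^n}, if ψ(y)/y = ψ(z)/z then y and z are F_q-linearly dependent. -/
/-!
Let `K = F_{q^t}` be the fixed field of `σ : x ↦ x ^ q ^ t` and `δ ≠ 0` with `σ δ = -δ`, so
that `F = K ⊕ δ K`. For `x = u + δ w` with `u, w ∈ K` one has
`ψ x = u ^ q ^ (t - 1) + δ ^ q w ^ q`, so `ψ x = (a + δ b) x` splits into two equations over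
`K`, involving `e = δ ^ (q - 1)`. The norm `N x = x ^ ((q ^ t - 1) / (q - 1))` maps `K` to
`F_q` and `N e = -1`. If `b = 0` the equations decouple, and `N a = 1` or `N a = -1` decides
which of `u`, `w` can be nonzero. If `b ≠ 0`, eliminating `u` gives `A g ^ q ^ (t - 1) = B g`
for `g = w₂ w₁ ^ q - w₁ w₂ ^ q ∈ K`, where `N B = -N A`; this forces `g = 0` unless
`a = 0`, and `a = 0` would make `N δ N b` a square root of `-1` that Frobenius negates, impossible
because `-1` is a square in `F_q` for `q ≡ 1 mod 4`.
-/

section Frobenius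

variable {R : Type*} [CommRing R] {q : ℕ}

theorem sub_pow_of_add_pow (hq : ∀ x y : R, (x + y) ^ q = x ^ q + y ^ q) (x y : R) :
    (x - y) ^ q = x ^ q - y ^ q := by
  rw [eq_sub_iff_add_eq, ← hq, sub_add_cancel]

theorem zero_pow_of_add_pow (hq : ∀ x y : R, (x + y) ^ q = x ^ q + y ^ q) : (0 : R) ^ q = 0 := by
  simpa using hq 0 0

theorem add_pow_pow_of_add_pow (hq : ∀ x y : R, (x + y) ^ q = x ^ q + y ^ q) (j : ℕ) (x y : R) :
    (x + y) ^ q ^ j = x ^ q ^ j + y ^ q ^ j := by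
  induction j with
  | zero => simp
  | succ j ih => rw [pow_succ, pow_mul, pow_mul, pow_mul, ih, hq]

theorem pow_pow_pow_sub_one {t : ℕ} (ht : t ≠ 0) (x : R) :
    (x ^ q) ^ q ^ (t - 1) = x ^ q ^ t := by
  rw [← pow_mul, ← pow_succ', Nat.sub_add_cancel (Nat.one_le_iff_ne_zero.2 ht)]

end Frobenius

section Field

variable {F : Type*} [Field F]

theorem div_pow_eq_div_of_mul_pow_eq {n : ℕ} {x y : F} (hx : x ≠ 0)
    (h : y * x ^ n = x * y ^ n) : (y / x) ^ n = y / x := by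
  rw [div_pow, div_eq_div_iff (pow_ne_zero n hx) hx]
  linear_combination -h

theorem pow_ne_neg_self_of_sq_eq_neg_one {q : ℕ} (hq4 : q % 4 = 1)
    (h2 : (2 : F) ≠ 0) {x : F} (hx : x ^ 2 = -1) : x ^ q ≠ -x := by
  intro h
  have hfix : x ^ q = x := by
    obtain ⟨k, rfl⟩ : ∃ k, q = 4 * k + 1 := ⟨q / 4, by omega⟩
    rw [pow_succ, pow_mul, show x ^ 4 = (x ^ 2) ^ 2 by ring, hx]
    simp
  have : 2 * x = 0 := by linear_combination h - hfix
  simp [h2] at this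
  simp [this] at hx

end Field

section Conjugation

variable {F : Type*} [Field F] {Q : ℕ}

theorem exists_pow_eq_neg_self [Fintype F] (hQ : ∀ x y : F, (x + y) ^ Q = x ^ Q + y ^ Q)
    (hF : Fintype.card F = Q ^ 2) : ∃ δ : F, δ ≠ 0 ∧ δ ^ Q = -δ := by
  have hQ1 : 1 < Q := by
    have := Fintype.one_lt_card (α := F)
    rw [hF] at this
    by_contra! h
    interval_cases Q <;> simp at this
  obtain ⟨x, hx⟩ : ∃ x : F, x ^ Q ≠ x := by
    by_contra! h
    have hdvd : Fintype.card F - 1 ∣ Q - 1 := (FiniteField.forall_pow_eq_one_iff F _).1 fun x ↦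
      Units.ext <| mul_right_cancel₀ x.ne_zero <| by
        rw [Units.val_pow_eq_pow_val, pow_sub_one_mul (by omega), h, Units.val_one, one_mul]
    rw [hF] at hdvd
    have := Nat.le_of_dvd (by omega) hdvd
    have : Q < Q ^ 2 := by nlinarith
    omega
  refine ⟨x - x ^ Q, sub_ne_zero.2 hx.symm, ?_⟩
  rw [sub_pow_of_add_pow hQ, ← pow_mul, ← sq, ← hF, FiniteField.pow_card, neg_sub]

theorem exists_eq_add_mul_of_pow_eq_neg (hQ : ∀ x y : F, (x + y) ^ Q = x ^ Q + y ^ Q)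
    (hinv : ∀ x : F, (x ^ Q) ^ Q = x) (h2 : (2 : F) ≠ 0) {δ : F} (hδ0 : δ ≠ 0)
    (hδ : δ ^ Q = -δ) (x : F) : ∃ u w : F, u ^ Q = u ∧ w ^ Q = w ∧ x = u + δ * w := by
  have h2Q : (2 : F) ^ Q = 2 := by rw [← one_add_one_eq_two, hQ, one_pow]
  refine ⟨(x + x ^ Q) / 2, (x - x ^ Q) / (2 * δ), ?_, ?_, ?_⟩
  · rw [div_pow, hQ, h2Q, hinv, add_comm]
  · rw [div_pow, sub_pow_of_add_pow hQ, mul_pow, h2Q, hinv, hδ]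
    field_simp
    ring
  · field_simp
    ring

theorem eq_zero_of_add_mul_eq_zero (hQ : ∀ x y : F, (x + y) ^ Q = x ^ Q + y ^ Q)
    (h2 : (2 : F) ≠ 0) {δ : F} (hδ0 : δ ≠ 0) (hδ : δ ^ Q = -δ) {u w : F} (hu : u ^ Q = u)
    (hw : w ^ Q = w) (h : u + δ * w = 0) : u = 0 ∧ w = 0 := by
  have hconj : u - δ * w = 0 := by
    have := congrArg (· ^ Q) h
    simp only [hQ, mul_pow, hu, hw, hδ, zero_pow_of_add_pow hQ] at this
    linear_combination this
  have hw0 : w = 0 := by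
    have : 2 * δ * w = 0 := by linear_combination h - hconj
    simpa [h2, hδ0] using this
  exact ⟨by simpa [hw0] using h, hw0⟩

end Conjugation

section Norm

variable {F : Type*} [Field F] {q s Q : ℕ}

-- `s * q + 1 = s + Q` says `s = (Q - 1) / (q - 1)`; for `Q = q ^ t`, `x ↦ x ^ s` is the norm
-- from `F_{q^t}` to `F_q`.
theorem pow_pow_mul_self (hs : s * q + 1 = s + Q) (x : F) : (x ^ s) ^ q * x = x ^ s * x ^ Q := by
  rw [← pow_mul, ← pow_succ, hs, pow_add]

theorem pow_pow_pow_eq_self (hs : s * q + 1 = s + Q) {x : F} (hx : x ^ Q = x) (hx0 : x ≠ 0)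
    (j : ℕ) : (x ^ s) ^ q ^ j = x ^ s := by
  have hq : (x ^ s) ^ q = x ^ s := mul_right_cancel₀ hx0 (by rw [pow_pow_mul_self hs, hx])
  induction j with
  | zero => simp
  | succ j ih => rw [pow_succ, pow_mul, ih, hq]

theorem pow_pow_eq_neg_of_pow_eq_neg (hs : s * q + 1 = s + Q) {δ : F} (hδ0 : δ ≠ 0)
    (hδ : δ ^ Q = -δ) : (δ ^ s) ^ q = -δ ^ s :=
  mul_right_cancel₀ hδ0 (by rw [pow_pow_mul_self hs, hδ]; ring)

theorem pow_eq_pow_of_mul_pow_pow_eq (hs : s * q + 1 = s + Q) {x c d : F} (hx : x ^ Q = x)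
    (hx0 : x ≠ 0) {j : ℕ} (h : c * x ^ q ^ j = d * x) : c ^ s = d ^ s := by
  have := congrArg (· ^ s) h
  simp only [mul_pow, pow_right_comm x (q ^ j) s, pow_pow_pow_eq_self hs hx hx0] at this
  exact mul_right_cancel₀ (pow_ne_zero s hx0) this

end Norm

section Components

variable {F : Type*} [Field F] {q t s : ℕ}

def psi (q t : ℕ) (x : F) : F :=
  (x ^ q ^ 1 + x ^ q ^ (t - 1) - x ^ q ^ (t + 1) + x ^ q ^ (2 * t - 1)) / 2

theorem psi_add_mul (hq : ∀ x y : F, (x + y) ^ q = x ^ q + y ^ q) (h2 : (2 : F) ≠ 0)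
    {δ u w : F} (hδ : δ ^ q ^ t = -δ) (hu : u ^ q ^ t = u) (hw : w ^ q ^ t = w) :
    psi q t (u + δ * w) = u ^ q ^ (t - 1) + δ ^ q * w ^ q := by
  have hconj : (u + δ * w) ^ q ^ t = u - δ * w := by
    rw [add_pow_pow_of_add_pow hq, mul_pow, hu, hw, hδ]
    ring
  have hσφ : (u + δ * w) ^ q ^ (t + 1) = (u - δ * w) ^ q := by rw [pow_succ, pow_mul, hconj]
  have hστ : (u + δ * w) ^ q ^ (2 * t - 1) = (u - δ * w) ^ q ^ (t - 1) := by
    rw [show 2 * t - 1 = t + (t - 1) by omega, pow_add, pow_mul, hconj]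
  rw [psi, hσφ, hστ, pow_one]
  simp only [hq, sub_pow_of_add_pow hq, add_pow_pow_of_add_pow hq,
    sub_pow_of_add_pow (add_pow_pow_of_add_pow hq _), mul_pow]
  field_simp
  ring

-- The two `K`-components of `ψ (u + δ w) = (a + δ b) (u + δ w)`, where `δ ^ q = δ e`.
structure IsEigenComponents (q t : ℕ) (δ e a b u w : F) : Prop where
  fixed_u : u ^ q ^ t = u
  fixed_w : w ^ q ^ t = w
  eq_u : u ^ q ^ (t - 1) = a * u + δ ^ 2 * (b * w)
  eq_w : e * w ^ q = b * u + a * w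

theorem IsEigenComponents.of_eq (hq : ∀ x y : F, (x + y) ^ q = x ^ q + y ^ q) (h2 : (2 : F) ≠ 0)
    {δ e a b u w : F} (hδ0 : δ ≠ 0) (hδ : δ ^ q ^ t = -δ) (he : δ ^ q = δ * e)
    (heK : e ^ q ^ t = e) (ha : a ^ q ^ t = a) (hb : b ^ q ^ t = b) (hu : u ^ q ^ t = u)
    (hw : w ^ q ^ t = w) (h : u ^ q ^ (t - 1) + δ ^ q * w ^ q = (a + δ * b) * (u + δ * w)) :
    IsEigenComponents q t δ e a b u w := by
  have hσ := add_pow_pow_of_add_pow hq t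
  have hfix : ∀ {x : F} (n : ℕ), x ^ q ^ t = x → (x ^ n) ^ q ^ t = x ^ n := by
    intro x n hx
    rw [pow_right_comm, hx]
  have hδ2 : (δ ^ 2) ^ q ^ t = δ ^ 2 := by rw [pow_right_comm, hδ, neg_sq]
  obtain ⟨h₁, h₂⟩ := eq_zero_of_add_mul_eq_zero hσ h2 hδ0 hδ
    (u := u ^ q ^ (t - 1) - (a * u + δ ^ 2 * (b * w))) (w := e * w ^ q - (b * u + a * w))
    (by simp only [sub_pow_of_add_pow hσ, hσ, mul_pow, hfix _ hu, ha, hb, hu, hw, hδ2])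
    (by simp only [sub_pow_of_add_pow hσ, hσ, mul_pow, hfix q hw, heK, ha, hb, hu, hw])
    (by linear_combination h - w ^ q * he)
  exact ⟨hu, hw, sub_eq_zero.1 h₁, sub_eq_zero.1 h₂⟩

theorem mul_pow_pow_sub_one_ne (hq4 : q % 4 = 1) (h2 : (2 : F) ≠ 0) (hs : s * q + 1 = s + q ^ t)
    {δ e b : F} (hδ0 : δ ≠ 0) (hδ : δ ^ q ^ t = -δ) (hes : e ^ s = -1) (hb : b ^ q ^ t = b)
    (hb0 : b ≠ 0) :
    b * e ^ q ^ (t - 1) ≠ δ ^ 2 * b ^ 2 * b ^ q ^ (t - 1) := by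
  intro h
  have hodd : Odd (q ^ (t - 1)) := (Nat.odd_iff.2 (by omega)).pow
  have hbs := pow_pow_pow_eq_self hs hb hb0
  have hnorm := congrArg (· ^ s) h
  simp only [mul_pow] at hnorm
  rw [pow_right_comm e, pow_right_comm b (q ^ (t - 1)), pow_right_comm δ, pow_right_comm b 2,
    hes, hodd.neg_one_pow, hbs] at hnorm
  apply pow_ne_neg_self_of_sq_eq_neg_one hq4 h2 (x := δ ^ s * b ^ s)
  · exact mul_right_cancel₀ (pow_ne_zero s hb0) (by linear_combination -hnorm)
  · have hbq : (b ^ s) ^ q = b ^ s := by simpa using hbs 1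
    rw [mul_pow, pow_pow_eq_neg_of_pow_eq_neg hs hδ0 hδ, hbq]
    ring

end Components

namespace IsEigenComponents

variable {F : Type*} [Field F] {q t s : ℕ} {δ e a b u w u₁ w₁ u₂ w₂ : F}

theorem elim_u (hq : ∀ x y : F, (x + y) ^ q = x ^ q + y ^ q) (ht : t ≠ 0)
    (h : IsEigenComponents q t δ e a b u w) :
    b * a ^ q ^ (t - 1) * w ^ q ^ (t - 1) + b ^ q ^ (t - 1) * a * e * w ^ q =
      (b * e ^ q ^ (t - 1) + b ^ q ^ (t - 1) * a ^ 2 - δ ^ 2 * b ^ 2 * b ^ q ^ (t - 1)) * w := by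
  have hτ := congrArg (· ^ q ^ (t - 1)) h.eq_w
  simp only [mul_pow, add_pow_pow_of_add_pow hq, pow_pow_pow_sub_one ht, h.fixed_w, h.eq_u] at hτ
  linear_combination b ^ q ^ (t - 1) * a * h.eq_w - b * hτ

theorem w_ne_zero (hq : ∀ x y : F, (x + y) ^ q = x ^ q + y ^ q) (hb0 : b ≠ 0)
    (h : IsEigenComponents q t δ e a b u w) (hne : u ≠ 0 ∨ w ≠ 0) : w ≠ 0 := by
  rintro rfl
  have hbu : b * u = 0 := by simpa [zero_pow_of_add_pow hq] using h.eq_w.symm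
  simp_all

theorem exists_eq_mul_of_b_eq_zero (ht : t ≠ 0) (h2 : (2 : F) ≠ 0) (hs : s * q + 1 = s + q ^ t)
    (he0 : e ≠ 0) (hes : e ^ s = -1) (h₁ : IsEigenComponents q t δ e a 0 u₁ w₁)
    (h₂ : IsEigenComponents q t δ e a 0 u₂ w₂) (hne : u₁ ≠ 0 ∨ w₁ ≠ 0) :
    ∃ c : F, c ^ q = c ∧ u₂ = c * u₁ ∧ w₂ = c * w₁ := by
  have norm_of_u : ∀ {u w : F}, IsEigenComponents q t δ e a 0 u w → u ≠ 0 → a ^ s = 1 :=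
    fun h hu ↦ (pow_eq_pow_of_mul_pow_pow_eq hs h.fixed_u hu (c := 1)
      (by rw [one_mul, h.eq_u]; ring)).symm.trans (one_pow s)
  have norm_of_w : ∀ {u w : F}, IsEigenComponents q t δ e a 0 u w → w ≠ 0 → a ^ s = -1 :=
    fun h hw ↦ (pow_eq_pow_of_mul_pow_pow_eq hs h.fixed_w hw (j := 1)
      (by rw [pow_one, h.eq_w]; ring)).symm.trans hes
  have h1 : (1 : F) ≠ -1 := fun h ↦ h2 (by linear_combination h)
  by_cases hw₁ : w₁ = 0
  · have hu₁ : u₁ ≠ 0 := hne.resolve_right (not_not.2 hw₁)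
    have hw₂ : w₂ = 0 := by
      by_contra hw₂
      exact h1 ((norm_of_u h₁ hu₁).symm.trans (norm_of_w h₂ hw₂))
    have hτ : (u₂ / u₁) ^ q ^ (t - 1) = u₂ / u₁ :=
      div_pow_eq_div_of_mul_pow_eq hu₁ (by rw [h₁.eq_u, h₂.eq_u]; ring)
    have hσ : (u₂ / u₁) ^ q ^ t = u₂ / u₁ :=
      div_pow_eq_div_of_mul_pow_eq hu₁ (by rw [h₁.fixed_u, h₂.fixed_u]; ring)
    refine ⟨u₂ / u₁, ?_, by field_simp, by simp [hw₁, hw₂]⟩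
    conv_lhs => rw [← hτ]
    rw [pow_right_comm, pow_pow_pow_sub_one ht, hσ]
  · have ha : a ^ s = -1 := norm_of_w h₁ hw₁
    have hu : ∀ {u w : F}, IsEigenComponents q t δ e a 0 u w → u = 0 := fun h ↦ by
      by_contra hu
      exact h1 ((norm_of_u h hu).symm.trans ha)
    refine ⟨w₂ / w₁, div_pow_eq_div_of_mul_pow_eq hw₁ (mul_left_cancel₀ he0 ?_), by
      simp [hu h₁, hu h₂], by field_simp⟩
    linear_combination w₂ * h₁.eq_w - w₁ * h₂.eq_w

theorem exists_eq_mul_of_b_ne_zero (hq : ∀ x y : F, (x + y) ^ q = x ^ q + y ^ q)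
    (hq4 : q % 4 = 1) (ht : t ≠ 0) (h2 : (2 : F) ≠ 0) (hs : s * q + 1 = s + q ^ t)
    (hδ0 : δ ≠ 0) (hδ : δ ^ q ^ t = -δ) (hes : e ^ s = -1) (ha : a ^ q ^ t = a)
    (hb : b ^ q ^ t = b) (hb0 : b ≠ 0) (h₁ : IsEigenComponents q t δ e a b u₁ w₁)
    (h₂ : IsEigenComponents q t δ e a b u₂ w₂) (hne : u₁ ≠ 0 ∨ w₁ ≠ 0) :
    ∃ c : F, c ^ q = c ∧ u₂ = c * u₁ ∧ w₂ = c * w₁ := by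
  have hw₁ : w₁ ≠ 0 := h₁.w_ne_zero hq hb0 hne
  have hτ := add_pow_pow_of_add_pow hq (t - 1)
  have ha0 : a ≠ 0 := by
    rintro rfl
    apply mul_pow_pow_sub_one_ne hq4 h2 hs hδ0 hδ hes hb hb0
    have hC := h₁.elim_u hq ht
    simp only [zero_pow_of_add_pow hτ, mul_zero, zero_mul, add_zero] at hC
    linear_combination (mul_eq_zero.1 hC.symm).resolve_right hw₁
  set g := w₂ * w₁ ^ q - w₁ * w₂ ^ q
  have hg : g = 0 := by
    by_contra hg0
    have hgK : g ^ q ^ t = g := by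
      simp only [g, sub_pow_of_add_pow (add_pow_pow_of_add_pow hq t), mul_pow,
        pow_right_comm _ q, h₁.fixed_w, h₂.fixed_w]
    have hgτ : b * a ^ q ^ (t - 1) * g ^ q ^ (t - 1) = b ^ q ^ (t - 1) * a * e * g := by
      simp only [g, sub_pow_of_add_pow hτ, mul_pow, pow_pow_pow_sub_one ht, h₁.fixed_w,
        h₂.fixed_w]
      linear_combination w₁ * h₂.elim_u hq ht - w₂ * h₁.elim_u hq ht
    have hnorm := pow_eq_pow_of_mul_pow_pow_eq hs hgK hg0 hgτ
    simp only [mul_pow, pow_right_comm _ (q ^ (t - 1)) s, pow_pow_pow_eq_self hs ha ha0,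
      pow_pow_pow_eq_self hs hb hb0, hes] at hnorm
    have : 2 * a ^ s * b ^ s = 0 := by linear_combination hnorm
    simp [h2, ha0, hb0] at this
  have hc := div_pow_eq_div_of_mul_pow_eq hw₁ (sub_eq_zero.1 hg)
  have hw₂ : w₂ = w₂ / w₁ * w₁ := by field_simp
  have hw₂q : w₂ ^ q = w₂ / w₁ * w₁ ^ q := by rw [← hc, ← mul_pow, ← hw₂]
  refine ⟨w₂ / w₁, hc, mul_left_cancel₀ hb0 ?_, hw₂⟩
  linear_combination -h₂.eq_w + w₂ / w₁ * h₁.eq_w + e * hw₂q - a * hw₂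

end IsEigenComponents

theorem exists_eq_mul_of_psi_eq_mul {F : Type*} [Field F] {q t s : ℕ}
    (hq : ∀ x y : F, (x + y) ^ q = x ^ q + y ^ q) (hq4 : q % 4 = 1) (ht : t ≠ 0)
    (hinv : ∀ x : F, (x ^ q ^ t) ^ q ^ t = x) (h2 : (2 : F) ≠ 0) (hs : s * q + 1 = s + q ^ t)
    {δ : F} (hδ0 : δ ≠ 0) (hδ : δ ^ q ^ t = -δ) {m y z : F} (hy : y ≠ 0)
    (hmy : psi q t y = m * y) (hmz : psi q t z = m * z) : ∃ c : F, c ^ q = c ∧ z = c * y := by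
  have hσ := add_pow_pow_of_add_pow hq t
  set e := δ ^ q / δ
  have he : δ ^ q = δ * e := (mul_div_cancel₀ _ hδ0).symm
  have heK : e ^ q ^ t = e := by
    rw [div_pow, pow_right_comm, hδ, (Nat.odd_iff.2 (by omega)).neg_pow, neg_div_neg_eq]
  have hes : e ^ s = -1 := by
    rw [div_pow, pow_right_comm, pow_pow_eq_neg_of_pow_eq_neg hs hδ0 hδ, neg_div,
      div_self (pow_ne_zero _ hδ0)]
  have he0 : e ≠ 0 := div_ne_zero (pow_ne_zero _ hδ0) hδ0
  have decompose := exists_eq_add_mul_of_pow_eq_neg hσ hinv h2 hδ0 hδ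
  obtain ⟨a, b, ha, hb, rfl⟩ := decompose m
  obtain ⟨u₁, w₁, hu₁, hw₁, rfl⟩ := decompose y
  obtain ⟨u₂, w₂, hu₂, hw₂, rfl⟩ := decompose z
  have components : ∀ {u w : F}, u ^ q ^ t = u → w ^ q ^ t = w →
      psi q t (u + δ * w) = (a + δ * b) * (u + δ * w) → IsEigenComponents q t δ e a b u w :=
    fun hu hw h ↦
      .of_eq hq h2 hδ0 hδ he heK ha hb hu hw (by rwa [← psi_add_mul hq h2 hδ hu hw])
  have h₁ := components hu₁ hw₁ hmy
  have h₂ := components hu₂ hw₂ hmz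
  have hne : u₁ ≠ 0 ∨ w₁ ≠ 0 := by
    by_contra! h
    simp [h] at hy
  obtain ⟨c, hc, rfl, rfl⟩ : ∃ c : F, c ^ q = c ∧ u₂ = c * u₁ ∧ w₂ = c * w₁ := by
    rcases eq_or_ne b 0 with rfl | hb0
    · exact IsEigenComponents.exists_eq_mul_of_b_eq_zero ht h2 hs he0 hes h₁ h₂ hne
    · exact h₁.exists_eq_mul_of_b_ne_zero hq hq4 ht h2 hs hδ0 hδ hes ha hb hb0 h₂ hne
  exact ⟨c, hc, by ring⟩

theorem stmt_9_general (p r q t : ℕ) (hp : p.Prime)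
    (hq : q = p ^ r) (hq4 : q % 4 = 1) (ht : 3 ≤ t)
    (F : Type) [Field F] [Fintype F] (hF : Fintype.card F = q ^ (2 * t))
    (ψ : F → F)
    (hψ : ∀ x : F, ψ x = (x ^ q ^ 1 + x ^ q ^ (t - 1) - x ^ q ^ (t + 1) + x ^ q ^ (2 * t - 1)) / 2) :
    ∀ y z : F, y ≠ 0 → z ≠ 0 → ψ y / y = ψ z / z →
      ∃ c : F, c ^ q = c ∧ z = c * y := by
  intro y z hy hz hyz
  obtain rfl : ψ = psi q t := funext hψ
  have := Fact.mk hp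
  have : CharP F p := charP_of_card_eq_prime_pow (f := r * (2 * t)) (by rw [hF, hq, ← pow_mul])
  have hfrob : ∀ x y : F, (x + y) ^ q = x ^ q + y ^ q := fun x y ↦ by
    rw [hq]
    exact add_pow_char_pow x y p r
  have h2 : (2 : F) ≠ 0 := Ring.two_ne_zero fun h ↦ by
    have := FiniteField.even_card_of_char_two h
    simp [hF, Nat.pow_mod, show q % 2 = 1 by omega] at this
  have hinv : ∀ x : F, (x ^ q ^ t) ^ q ^ t = x := fun x ↦ by
    rw [← pow_mul, ← pow_add, ← two_mul, ← hF, FiniteField.pow_card]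
  obtain ⟨δ, hδ0, hδ⟩ := exists_pow_eq_neg_self (add_pow_pow_of_add_pow hfrob t)
    (by rw [hF, mul_comm, pow_mul])
  obtain ⟨s, hs⟩ : ∃ s, s * q + 1 = s + q ^ t :=
    ⟨∑ i ∈ Finset.range t, q ^ i, by
      rw [mul_comm, ← geom_sum_succ, geom_sum_succ', add_comm]⟩
  exact exists_eq_mul_of_psi_eq_mul hfrob hq4 (by omega) hinv h2 hs hδ0 hδ hy
    (div_mul_cancel₀ _ hy).symm ((div_eq_iff hz).1 hyz.symm)

theorem stmt_9 (p r q t : ℕ) (hp : p.Prime) (hr : 0 < r)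
    (hq : q = p ^ r) (hq4 : q % 4 = 1) (ht : 3 ≤ t) (htodd : Odd t)
    (F : Type) [Field F] [Fintype F] (hF : Fintype.card F = q ^ (2 * t))
    (ψ : F → F)
    (hψ : ∀ x : F, ψ x = (x ^ q ^ 1 + x ^ q ^ (t - 1) - x ^ q ^ (t + 1) + x ^ q ^ (2 * t - 1)) / 2) :
    ∀ y z : F, y ≠ 0 → z ≠ 0 → ψ y / y = ψ z / z →
      ∃ c : F, c ^ q = c ∧ z = c * y :=
  stmt_9_general p r q t hp hq hq4 ht F hF ψ hψ
end

section
/- Let q be an odd prime power, t ≥ 3, n = 2t, and ψ the map on F_{q^n} defined above. If gcd(k, t) > 1 for some 1 ≤ k < 2t, then ψ^{(k)} is not a scattered q-polynomial. -/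
/-!
Let `d = gcd(k, t) > 1`. On the subfield `F_{q^d}` the four Frobenius powers in `ψ` collapse
pairwise (their exponents are `1, d - 1, 1, d - 1` modulo `d`), so `ψ` acts there as
`x ↦ x^{q^{d-1}}` and `ψ^{(k)}` as `x ↦ x^{q^{k(d-1)}}`, which is the identity because `d ∣ k`.
Hence `ψ^{(k)}(x)/x = 1` on all of `F_{q^d}^*`, while `F_{q^d}` contains elements outside `F_q`.
-/

section FrobeniusFixed

variable {M : Type*} [Monoid M] {x : M} {q d : ℕ}

lemma pow_pow_eq_self_of_dvd (hx : x ^ q ^ d = x) {j : ℕ} (hj : d ∣ j) : x ^ q ^ j = x := by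
  obtain ⟨m, rfl⟩ := hj
  have := Function.IsFixedPt.iterate (f := fun y : M => y ^ q ^ d) hx m
  rwa [pow_iterate, ← pow_mul] at this

lemma pow_pow_add_of_dvd (hx : x ^ q ^ d = x) {j : ℕ} (hj : d ∣ j) (i : ℕ) :
    x ^ q ^ (j + i) = x ^ q ^ i := by
  rw [pow_add, pow_mul, pow_pow_eq_self_of_dvd hx hj]

lemma iterate_eq_pow_pow_of_eqOn {f : M → M} {N e : ℕ} (hf : ∀ y : M, y ^ N = y → f y = y ^ e)
    {x : M} (hx : x ^ N = x) (j : ℕ) : f^[j] x = x ^ e ^ j := by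
  induction j with
  | zero => simp
  | succ j ih =>
    rw [Function.iterate_succ_apply', ih, hf _ (by rw [pow_right_comm, hx]), ← pow_mul, pow_succ]

end FrobeniusFixed

section FiniteField

variable {K : Type*} [Field K] [Fintype K]

lemma two_ne_zero_of_odd_card (hK : Odd (Fintype.card K)) : (2 : K) ≠ 0 := by
  refine Ring.two_ne_zero fun h => ?_
  have := FiniteField.even_card_iff_char_two.mp h
  rw [Nat.odd_iff] at hK
  omega

lemma exists_units_orderOf_eq {m : ℕ} (hm : 0 < m) (hmK : m ∣ Fintype.card K - 1) :
    ∃ ζ : Kˣ, orderOf ζ = m := by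
  classical
  have hcard := IsCyclic.card_orderOf_eq_totient (α := Kˣ) (d := m) (by rwa [Fintype.card_units])
  obtain ⟨ζ, hζ⟩ := Finset.card_pos.mp (hcard ▸ Nat.totient_pos.mpr hm)
  exact ⟨ζ, (Finset.mem_filter.mp hζ).2⟩

/-- A unit of order `q^d - 1` lies in `F_{q^d}` but not in `F_q`. -/
lemma exists_pow_pow_eq_self_and_pow_ne_self {q n d : ℕ} (hK : Fintype.card K = q ^ n)
    (hq : 1 < q) (hd : 1 < d) (hdn : d ∣ n) : ∃ w : K, w ^ q ^ d = w ∧ w ^ q ≠ w := by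
  have hqd : q < q ^ d := by simpa using Nat.pow_lt_pow_right hq hd
  have hdvd : q ^ d - 1 ∣ Fintype.card K - 1 := by
    rw [hK, ← Nat.mul_div_cancel' hdn, pow_mul]
    exact Nat.sub_one_dvd_pow_sub_one _ _
  obtain ⟨ζ, hζ⟩ := exists_units_orderOf_eq (by omega) hdvd
  refine ⟨ζ, ?_, fun h => ?_⟩
  · have : ζ ^ q ^ d = ζ := by
      rw [← Nat.sub_add_cancel (hq.le.trans hqd.le), pow_succ, ← hζ, pow_orderOf_eq_one, one_mul]
    exact_mod_cast congrArg Units.val this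
  · have : ζ ^ (q - 1) = 1 := by
      apply mul_right_cancel (b := ζ)
      rw [← pow_succ, Nat.sub_add_cancel hq.le, one_mul]
      exact Units.ext (by push_cast; exact h)
    have := Nat.le_of_dvd (by omega) (hζ ▸ orderOf_dvd_of_pow_eq_one this)
    omega

end FiniteField

section Psi

variable {F : Type*} [Field F] {q t : ℕ} {ψ : F → F}

lemma psi_eq_pow_pow_of_pow_pow_eq_self
    (hψ : ∀ x : F, ψ x = (x ^ q ^ 1 + x ^ q ^ (t - 1) - x ^ q ^ (t + 1) + x ^ q ^ (2 * t - 1)) / 2)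
    (h2 : (2 : F) ≠ 0) (ht : 0 < t) {d : ℕ} (hdt : d ∣ t) {x : F} (hx : x ^ q ^ d = x) :
    ψ x = x ^ q ^ (d - 1) := by
  have hd : d ≤ t := Nat.le_of_dvd ht hdt
  have hd0 : 0 < d := Nat.pos_of_dvd_of_pos hdt ht
  have hdt' : d ∣ 2 * t := hdt.mul_left 2
  have e1 : t - 1 = (t - d) + (d - 1) := by omega
  have e2 : 2 * t - 1 = (2 * t - d) + (d - 1) := by omega
  rw [hψ, e1, e2, pow_pow_add_of_dvd hx (Nat.dvd_sub hdt dvd_rfl),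
    pow_pow_add_of_dvd hx hdt, pow_pow_add_of_dvd hx (Nat.dvd_sub hdt' dvd_rfl)]
  field_simp
  ring

lemma iterate_psi_eq_self
    (hψ : ∀ x : F, ψ x = (x ^ q ^ 1 + x ^ q ^ (t - 1) - x ^ q ^ (t + 1) + x ^ q ^ (2 * t - 1)) / 2)
    (h2 : (2 : F) ≠ 0) (ht : 0 < t) {d k : ℕ} (hdt : d ∣ t) (hdk : d ∣ k) {x : F}
    (hx : x ^ q ^ d = x) : ψ^[k] x = x := by
  rw [iterate_eq_pow_pow_of_eqOn (fun y => psi_eq_pow_pow_of_pow_pow_eq_self hψ h2 ht hdt) hx,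
    ← pow_mul]
  exact pow_pow_eq_self_of_dvd hx (hdk.mul_left _)

end Psi

theorem stmt_10_general (p r q t k : ℕ) (hpodd : Odd p)
    (hq : q = p ^ r) (ht : 3 ≤ t)
    (hgcd : 1 < Nat.gcd k t)
    (F : Type) [Field F] [Fintype F] (hF : Fintype.card F = q ^ (2 * t))
    (ψ : F → F)
    (hψ : ∀ x : F, ψ x = (x ^ q ^ 1 + x ^ q ^ (t - 1) - x ^ q ^ (t + 1) + x ^ q ^ (2 * t - 1)) / 2) :
    ¬ (∀ y z : F, y ≠ 0 → z ≠ 0 → ψ^[k] y / y = ψ^[k] z / z →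
        ∃ c : F, c ^ q = c ∧ z = c * y) := by
  intro hscattered
  have hqodd : Odd q := hq ▸ hpodd.pow
  have h2 : (2 : F) ≠ 0 := two_ne_zero_of_odd_card (hF ▸ hqodd.pow)
  have hq1 : 1 < q := by
    have hcard := hF ▸ Fintype.one_lt_card (α := F)
    have : q ≠ 1 := by rintro rfl; simp at hcard
    have := hqodd.pos
    omega
  obtain ⟨w, hwd, hwq⟩ := exists_pow_pow_eq_self_and_pow_ne_self hF hq1 hgcd
    ((Nat.gcd_dvd_right k t).mul_left 2)
  have hw0 : w ≠ 0 := by rintro rfl; exact hwq (zero_pow (by omega))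
  have hfix {x : F} (hx : x ^ q ^ Nat.gcd k t = x) : ψ^[k] x = x :=
    iterate_psi_eq_self hψ h2 (by omega) (Nat.gcd_dvd_right k t) (Nat.gcd_dvd_left k t) hx
  obtain ⟨c, hc, rfl⟩ := hscattered 1 w one_ne_zero hw0 (by
    rw [hfix (one_pow _), hfix hwd, div_self one_ne_zero, div_self hw0])
  exact hwq (by rw [mul_one, hc])

theorem stmt_10 (p r q t k : ℕ) (hp : p.Prime) (hpodd : Odd p) (hr : 0 < r)
    (hq : q = p ^ r) (ht : 3 ≤ t) (hk1 : 1 ≤ k) (hk2 : k < 2 * t)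
    (hgcd : 1 < Nat.gcd k t)
    (F : Type) [Field F] [Fintype F] (hF : Fintype.card F = q ^ (2 * t))
    (ψ : F → F)
    (hψ : ∀ x : F, ψ x = (x ^ q ^ 1 + x ^ q ^ (t - 1) - x ^ q ^ (t + 1) + x ^ q ^ (2 * t - 1)) / 2) :
    ¬ (∀ y z : F, y ≠ 0 → z ≠ 0 → ψ^[k] y / y = ψ^[k] z / z →
        ∃ c : F, c ^ q = c ∧ z = c * y) :=
  stmt_10_general p r q t k hpodd hq ht hgcd F hF ψ hψ
end
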